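/- arXiv:1502.03955 — 4 statements merged into one kernel-verified Lean document; each statement's English description precedes it below -/
import Mathlib

section
/- For every 0<a<1, the sequences sup_{a/n ≤ t ≤ 1} max( t/𝕌ₙ(t), 𝕌ₙ(t)/t ) and sup_{a/n ≤ t ≤ 1} max( t/𝕍ₙ(t), 𝕍ₙ(t)/t ) are both O_p(1) as n→∞. -/
open MeasureTheory ProbabilityTheory Filter Set
open scoped Classical

/-- Empirical distribution function of the first `n` values of the sequence `u`:
`𝕌ₙ(t) = n⁻¹ #{i ≤ n : u i ≤ t}`. -/
noncomputable def ecdf (u : ℕ → ℝ) (n : ℕ) (t : ℝ) : ℝ :=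
  (((Finset.range n).filter (fun i => u i ≤ t)).card : ℝ) / n

/-- Empirical quantile function: `𝕍ₙ(t) = inf{s : 𝕌ₙ(s) ≥ t}`. -/
noncomputable def equant (u : ℕ → ℝ) (n : ℕ) (t : ℝ) : ℝ :=
  sInf {s : ℝ | t ≤ ecdf u n s}

/-- A sequence `R n` of random variables is `O_p(1)`: for every `ε > 0` there is `M > 0`
with `limsup_n P(|Rₙ| > M) < ε`. -/
def IsBigOp {Ω : Type*} [MeasurableSpace Ω] (P : Measure Ω) (R : ℕ → Ω → ℝ) : Prop :=
  ∀ ε : ℝ, 0 < ε → ∃ M : ℝ, 0 < M ∧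
    Filter.limsup (fun n => P {ω | M < |R n ω|}) atTop < ENNReal.ofReal ε

/-!
Let `N(s) = n 𝕌ₙ(s)` count the sample points in `(-∞, s]`; it is binomial with mean `n s`. Chernoff
bounds with `e^t = M^{±1}` give `P(N(k/(Mn)) ≥ k) ≤ (e/M)^k` and `P(N(Mk/n) < k) ≤ (M e^{1-M})^k`, so
outside an event whose probability tends to `0` as `M → ∞`, uniformly in `n`, the order statistics
satisfy `k/(Mn) < U₍ₖ₎ ≤ Mk/n`. On that event `𝕌ₙ(t) ≤ M t` and `t < M (𝕌ₙ(t) + 1/n)` for `t ≤ 1`.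
For `t ≥ a/n` the error `1/n ≤ t/a` is of the order of `t`, and the Galois connection
`t ≤ 𝕌ₙ(s) ↔ 𝕍ₙ(t) ≤ s` transfers both bounds to `𝕍ₙ`; all ratios are then at most `M (2 + 1/a)`.
-/

open Topology

noncomputable def ecount (u : ℕ → ℝ) (n : ℕ) (s : ℝ) : ℕ :=
  ((Finset.range n).filter (fun i => u i ≤ s)).card

-- In terms of the order statistics: `k/(Mn) < u₍ₖ₎` for `k ≤ n`, and `u₍ₖ₎ ≤ Mk/n` when `Mk ≤ n`.
structure WellSpread (u : ℕ → ℝ) (n : ℕ) (M : ℝ) : Prop where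
  mem_Ioo : ∀ i < n, u i ∈ Ioo 0 1
  ecount_lt : ∀ k ∈ Finset.Icc 1 n, ecount u n (k / (M * n)) < k
  le_ecount : ∀ k ∈ Finset.Icc 1 n, (k : ℝ) * M ≤ n → k ≤ ecount u n (M * k / n)

lemma abs_iSup_le_of_forall_mem_Icc {ι : Sort*} {f : ι → ℝ} {K : ℝ} (hf : ∀ i, f i ∈ Icc 0 K)
    (hK : 0 ≤ K) : |⨆ i, f i| ≤ K := by
  rw [abs_of_nonneg (Real.iSup_nonneg fun i => (hf i).1)]
  exact Real.iSup_le (fun i => (hf i).2) hK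

lemma sum_Icc_pow_le {r : ℝ} (hr0 : 0 ≤ r) (hr1 : r < 1) (n : ℕ) :
    ∑ k ∈ Finset.Icc 1 n, r ^ k ≤ r / (1 - r) := by
  simpa [← Finset.Ico_add_one_right_eq_Icc] using
    geom_sum_Ico_le_of_lt_one (m := 1) (n := n + 1) hr0 hr1

section Deterministic

variable {u : ℕ → ℝ} {n : ℕ} {M a s t : ℝ}

lemma ecdf_eq_ecount_div (u : ℕ → ℝ) (n : ℕ) (s : ℝ) : ecdf u n s = ecount u n s / n := rfl

lemma ecount_mono (u : ℕ → ℝ) (n : ℕ) : Monotone (ecount u n) := fun _ _ h =>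
  Finset.card_le_card fun _ hi => by
    simp only [Finset.mem_filter] at hi ⊢
    exact ⟨hi.1, hi.2.trans h⟩

lemma ecount_le (u : ℕ → ℝ) (n : ℕ) (s : ℝ) : ecount u n s ≤ n :=
  (Finset.card_filter_le _ _).trans (Finset.card_range n).le

lemma ecdf_nonneg (u : ℕ → ℝ) (n : ℕ) (s : ℝ) : 0 ≤ ecdf u n s := by
  rw [ecdf_eq_ecount_div]; positivity

lemma ecount_eq_zero_of_nonpos (hu : ∀ i < n, u i ∈ Ioo 0 1) (hs : s ≤ 0) : ecount u n s = 0 :=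
  Finset.card_eq_zero.2 <| Finset.filter_eq_empty_iff.2 fun i hi hle =>
    (hu i (Finset.mem_range.1 hi)).1.not_ge (hle.trans hs)

lemma ecdf_one (hu : ∀ i < n, u i ∈ Ioo 0 1) (hn : n ≠ 0) : ecdf u n 1 = 1 := by
  have : ecount u n 1 = n := by
    rw [ecount, Finset.filter_true_of_mem fun i hi => (hu i (Finset.mem_range.1 hi)).2.le,
      Finset.card_range]
  rw [ecdf_eq_ecount_div, this, div_self (Nat.cast_ne_zero.2 hn)]

lemma one_le_ecount_of_ecdf_pos (h : 0 < ecdf u n s) : 1 ≤ ecount u n s := by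
  by_contra! h0
  simp [ecdf_eq_ecount_div, Nat.lt_one_iff.1 h0] at h

-- For a nondecreasing function this is right-continuity; it makes the infimum defining `equant`
-- attained.
lemma upperSemicontinuous_ecdf (u : ℕ → ℝ) (n : ℕ) : UpperSemicontinuous (ecdf u n) := by
  have : ecdf u n = fun s => ∑ i ∈ Finset.range n, (Ici (u i)).indicator (fun _ => (n : ℝ)⁻¹) s := by
    ext s
    simp [ecdf, Set.indicator, Finset.sum_ite, div_eq_mul_inv]
  rw [this]
  exact upperSemicontinuous_sum fun i _ => isClosed_Ici.upperSemicontinuous_indicator (by positivity)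

lemma bddBelow_setOf_le_ecdf (hu : ∀ i < n, u i ∈ Ioo 0 1) (ht : 0 < t) :
    BddBelow {s | t ≤ ecdf u n s} := by
  refine ⟨0, fun s hs => le_of_not_gt fun hs0 => ?_⟩
  simp [ecdf_eq_ecount_div, ecount_eq_zero_of_nonpos hu hs0.le] at hs
  linarith

lemma equant_le_of_le_ecdf (hu : ∀ i < n, u i ∈ Ioo 0 1) (ht : 0 < t) (hs : t ≤ ecdf u n s) :
    equant u n t ≤ s :=
  csInf_le (bddBelow_setOf_le_ecdf hu ht) hs

lemma le_ecdf_equant (hu : ∀ i < n, u i ∈ Ioo 0 1) (hn : n ≠ 0) (ht : 0 < t) (ht1 : t ≤ 1) :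
    t ≤ ecdf u n (equant u n t) :=
  ((upperSemicontinuous_ecdf u n).isClosed_preimage t).csInf_mem
    ⟨1, by simpa [ecdf_one hu hn] using ht1⟩ (bddBelow_setOf_le_ecdf hu ht)

lemma equant_le_one (hu : ∀ i < n, u i ∈ Ioo 0 1) (hn : n ≠ 0) (ht : 0 < t) (ht1 : t ≤ 1) :
    equant u n t ≤ 1 :=
  equant_le_of_le_ecdf hu ht (by rwa [ecdf_one hu hn])

namespace WellSpread

lemma ecdf_lt_mul (h : WellSpread u n M) (hM : 0 < M) (ht : 0 < ecdf u n t) :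
    ecdf u n t < M * t := by
  set k := ecount u n t
  have hk : 1 ≤ k := one_le_ecount_of_ecdf_pos ht
  have hn : (0 : ℝ) < n := by exact_mod_cast hk.trans (ecount_le u n t)
  have hkt : (k : ℝ) / (M * n) < t :=
    (ecount_mono u n).reflect_lt (h.ecount_lt k (Finset.mem_Icc.2 ⟨hk, ecount_le u n t⟩))
  calc ecdf u n t = M * (k / (M * n)) := by
        change (k : ℝ) / n = _
        field_simp
    _ < M * t := by gcongr

lemma lt_mul_ecdf_add (h : WellSpread u n M) (hM : 1 ≤ M) (hn : n ≠ 0) (ht : t ≤ 1) :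
    t < M * (ecdf u n t + 1 / n) := by
  set k := ecount u n t
  have hn0 : (0 : ℝ) < n := by positivity
  have hrhs : M * (ecdf u n t + 1 / n) = M * ((k + 1 : ℕ) : ℝ) / n := by
    rw [ecdf_eq_ecount_div]; push_cast; ring
  rw [hrhs]
  by_cases hkM : ((k + 1 : ℕ) : ℝ) * M ≤ n
  · have hkn : k + 1 ≤ n := by
      exact_mod_cast (le_mul_of_one_le_right (by positivity) hM).trans hkM
    have := h.le_ecount (k + 1) (Finset.mem_Icc.2 ⟨le_add_self, hkn⟩) hkM
    exact (ecount_mono u n).reflect_lt (Nat.lt_of_lt_of_le (Nat.lt_succ_self k) this)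
  · rw [lt_div_iff₀ hn0]
    nlinarith

lemma ecdf_div_le (h : WellSpread u n M) (hM : 0 < M) (ht : 0 < t) : ecdf u n t / t ≤ M := by
  rcases (ecdf_nonneg u n t).eq_or_lt with h0 | hpos
  · rw [← h0, zero_div]; exact hM.le
  · rw [div_le_iff₀ ht]; linarith [h.ecdf_lt_mul hM hpos]

lemma div_ecdf_le (h : WellSpread u n M) (hM : 1 ≤ M) (ht1 : t ≤ 1) :
    t / ecdf u n t ≤ 2 * M := by
  rcases (ecdf_nonneg u n t).eq_or_lt with h0 | hpos
  · rw [← h0, div_zero]; positivity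
  · have hk := one_le_ecount_of_ecdf_pos hpos
    have hn : n ≠ 0 := by have := ecount_le u n t; omega
    have h1n : 1 / (n : ℝ) ≤ ecdf u n t := by
      rw [ecdf_eq_ecount_div]; gcongr; exact_mod_cast hk
    rw [div_le_iff₀ hpos]
    nlinarith [h.lt_mul_ecdf_add hM hn ht1]

lemma lt_mul_equant (h : WellSpread u n M) (hM : 0 < M) (hn : n ≠ 0) (ht : 0 < t) (ht1 : t ≤ 1) :
    t < M * equant u n t := by
  have hQ := le_ecdf_equant h.mem_Ioo hn ht ht1
  linarith [h.ecdf_lt_mul hM (ht.trans_le hQ)]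

lemma equant_le_mul (h : WellSpread u n M) (hM : 1 ≤ M) (hn : n ≠ 0) (ht : 0 < t) (ht1 : t ≤ 1) :
    equant u n t ≤ M * (t + 1 / n) := by
  by_cases hs : M * (t + 1 / n) ≤ 1
  · refine equant_le_of_le_ecdf h.mem_Ioo ht ?_
    have := h.lt_mul_ecdf_add hM hn hs
    nlinarith
  · linarith [equant_le_one h.mem_Ioo hn ht ht1]

lemma abs_iSup_ecdf_ratio_le (h : WellSpread u n M) (hM : 1 ≤ M) (ha : 0 < a) (hn : n ≠ 0) :
    |⨆ t : Icc (a / (n : ℝ)) 1, max ((t : ℝ) / ecdf u n t) (ecdf u n t / (t : ℝ))|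
      ≤ M * (2 + 1 / a) := by
  have hMa : 0 ≤ M * (1 / a) := by positivity
  refine abs_iSup_le_of_forall_mem_Icc (fun ⟨t, hat, ht1⟩ => ?_) (by positivity)
  have ht : 0 < t := (by positivity : 0 < a / n).trans_le hat
  exact ⟨le_max_of_le_right (div_nonneg (ecdf_nonneg u n t) ht.le),
    max_le (by linarith [h.div_ecdf_le hM ht1]) (by linarith [h.ecdf_div_le (by linarith) ht])⟩

lemma abs_iSup_equant_ratio_le (h : WellSpread u n M) (hM : 1 ≤ M) (ha : 0 < a) (hn : n ≠ 0) :
    |⨆ t : Icc (a / (n : ℝ)) 1, max ((t : ℝ) / equant u n t) (equant u n t / (t : ℝ))|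
      ≤ M * (2 + 1 / a) := by
  have hMa : 0 ≤ M * (1 / a) := by positivity
  refine abs_iSup_le_of_forall_mem_Icc (fun ⟨t, hat, ht1⟩ => ?_) (by positivity)
  have ht : 0 < t := (by positivity : 0 < a / n).trans_le hat
  have htQ := h.lt_mul_equant (by linarith) hn ht ht1
  have hQ : 0 < equant u n t := by nlinarith
  have h1n : 1 / (n : ℝ) ≤ t / a := by
    rw [div_le_div_iff₀ (by positivity) ha]
    rw [div_le_iff₀ (by positivity)] at hat
    linarith
  refine ⟨le_max_of_le_right (div_nonneg hQ.le ht.le), max_le ?_ ?_⟩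
  · rw [div_le_iff₀ hQ]; nlinarith
  · rw [div_le_iff₀ ht]
    have := h.equant_le_mul hM hn ht ht1
    calc equant u n t ≤ M * (t + t / a) := by nlinarith
      _ ≤ M * (2 + 1 / a) * t := by rw [div_eq_mul_one_div t a]; nlinarith

end WellSpread

end Deterministic

lemma ecount_eq_sum_indicator {Ω : Type*} (U : ℕ → Ω → ℝ) (n : ℕ) (s : ℝ) :
    (fun ω => (ecount (U · ω) n s : ℝ)) = ∑ i ∈ Finset.range n, (U i ⁻¹' Iic s).indicator 1 := by
  ext ω
  rw [ecount, Finset.card_filter, Finset.sum_apply]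
  push_cast
  rfl

section Probability

variable {Ω : Type*} [MeasurableSpace Ω] {P : Measure Ω} {U : ℕ → Ω → ℝ} {n k : ℕ} {M p s : ℝ}

lemma measurable_ecount (hmeas : ∀ i, Measurable (U i)) (n : ℕ) (s : ℝ) :
    Measurable fun ω => (ecount (U · ω) n s : ℝ) := by
  rw [ecount_eq_sum_indicator, Finset.sum_fn]
  exact Finset.measurable_sum _ fun i _ => measurable_one.indicator (hmeas i measurableSet_Iic)

lemma measureReal_preimage_Iic_of_map_eq {X : Ω → ℝ} (hX : Measurable X)
    (hunif : P.map X = volume.restrict (Ioo 0 1)) (hs0 : 0 ≤ s) (hs1 : s ≤ 1) :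
    P.real (X ⁻¹' Iic s) = s := by
  rw [← map_measureReal_apply hX measurableSet_Iic, hunif, Measure.restrict_congr_set Ioo_ae_eq_Icc,
    measureReal_restrict_apply measurableSet_Iic]
  have : Iic s ∩ Icc 0 1 = Icc 0 s := by
    ext x
    simp only [mem_inter_iff, mem_Iic, mem_Icc]
    exact ⟨fun hx => ⟨hx.2.1, hx.1⟩, fun hx => ⟨hx.2, hx.1, hx.2.trans hs1⟩⟩
  simp [this, hs0]

lemma measureReal_exists_notMem_Ioo (hmeas : ∀ i, Measurable (U i))
    (hunif : ∀ i, P.map (U i) = volume.restrict (Ioo 0 1)) (n : ℕ) :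
    P.real {ω | ¬ ∀ i < n, U i ω ∈ Ioo 0 1} = 0 := by
  have hnull i : P (U i ⁻¹' (Ioo 0 1)ᶜ) = 0 := by
    rw [← Measure.map_apply (hmeas i) measurableSet_Ioo.compl, hunif i,
      Measure.restrict_apply measurableSet_Ioo.compl]
    simp
  have hsub : {ω | ¬ ∀ i < n, U i ω ∈ Ioo 0 1} ⊆ ⋃ i, U i ⁻¹' (Ioo 0 1)ᶜ := fun ω hω => by
    push Not at hω
    obtain ⟨i, -, hi⟩ := hω
    exact mem_iUnion.2 ⟨i, hi⟩
  rw [measureReal_def, measure_mono_null hsub (measure_iUnion_null hnull), ENNReal.toReal_zero]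

variable [IsProbabilityMeasure P]

lemma mgf_indicator_one {A : Set Ω} (hA : MeasurableSet A) (t : ℝ) :
    mgf (A.indicator 1) P t = 1 + P.real A * (Real.exp t - 1) := by
  have : (fun ω => Real.exp (t * A.indicator 1 ω))
      = fun ω => A.indicator (fun _ => Real.exp t - 1) ω + 1 := by
    ext ω
    by_cases hω : ω ∈ A <;> simp [hω]
  rw [mgf, this, integral_add ((integrable_const _).indicator hA) (integrable_const 1),
    integral_indicator_const _ hA]
  simp only [smul_eq_mul, integral_const, probReal_univ]
  ring

lemma mgf_ecount_le (hmeas : ∀ i, Measurable (U i)) (hindep : iIndepFun U P)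
    (hp : ∀ i, P.real (U i ⁻¹' Iic s) = p) (t : ℝ) :
    mgf (fun ω => (ecount (U · ω) n s : ℝ)) P t ≤ Real.exp (n * p * (Real.exp t - 1)) := by
  have hind : iIndepFun (fun i => (U i ⁻¹' Iic s).indicator (1 : Ω → ℝ)) P :=
    hindep.comp (fun _ => (Iic s).indicator 1) fun _ => measurable_one.indicator measurableSet_Iic
  rw [ecount_eq_sum_indicator,
    hind.mgf_sum (fun i => measurable_one.indicator (hmeas i measurableSet_Iic))]
  simp_rw [mgf_indicator_one (hmeas _ measurableSet_Iic), hp, Finset.prod_const, Finset.card_range]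
  have hp0 : 0 ≤ p := hp 0 ▸ measureReal_nonneg
  have hp1 : p ≤ 1 := hp 0 ▸ measureReal_le_one
  calc (1 + p * (Real.exp t - 1)) ^ n ≤ Real.exp (p * (Real.exp t - 1)) ^ n := by
        gcongr
        · nlinarith [Real.exp_pos t]
        · linarith [Real.add_one_le_exp (p * (Real.exp t - 1))]
    _ = Real.exp (n * p * (Real.exp t - 1)) := by rw [← Real.exp_nat_mul, mul_assoc]

lemma integrable_exp_mul_ecount (hmeas : ∀ i, Measurable (U i)) (t : ℝ) :
    Integrable (fun ω => Real.exp (t * ecount (U · ω) n s)) P :=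
  integrable_exp_mul_of_mem_Icc (a := 0) (b := n) (measurable_ecount hmeas n s).aemeasurable
    (ae_of_all _ fun _ => ⟨Nat.cast_nonneg _, Nat.cast_le.2 (ecount_le _ n s)⟩)

lemma measureReal_ecount_ge_le_exp (hmeas : ∀ i, Measurable (U i)) (hindep : iIndepFun U P)
    (hp : ∀ i, P.real (U i ⁻¹' Iic s) = p) {t : ℝ} (ht : 0 ≤ t) (x : ℝ) :
    P.real {ω | x ≤ ecount (U · ω) n s} ≤ Real.exp (-t * x + n * p * (Real.exp t - 1)) := by
  rw [Real.exp_add]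
  exact (measure_ge_le_exp_mul_mgf x ht (integrable_exp_mul_ecount hmeas t)).trans
    (by gcongr; exact mgf_ecount_le hmeas hindep hp t)

lemma measureReal_ecount_le_le_exp (hmeas : ∀ i, Measurable (U i)) (hindep : iIndepFun U P)
    (hp : ∀ i, P.real (U i ⁻¹' Iic s) = p) {t : ℝ} (ht : t ≤ 0) (x : ℝ) :
    P.real {ω | (ecount (U · ω) n s : ℝ) ≤ x} ≤ Real.exp (-t * x + n * p * (Real.exp t - 1)) := by
  rw [Real.exp_add]
  exact (measure_le_le_exp_mul_mgf x ht (integrable_exp_mul_ecount hmeas t)).trans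
    (by gcongr; exact mgf_ecount_le hmeas hindep hp t)

lemma measureReal_ecount_ge_le_pow (hmeas : ∀ i, Measurable (U i)) (hindep : iIndepFun U P)
    (hunif : ∀ i, P.map (U i) = volume.restrict (Ioo 0 1)) (hM : 1 ≤ M) (hk : k ∈ Finset.Icc 1 n) :
    P.real {ω | k ≤ ecount (U · ω) n (k / (M * n))} ≤ (Real.exp 1 / M) ^ k := by
  obtain ⟨hk1, hkn⟩ := Finset.mem_Icc.1 hk
  have hM0 : 0 < M := one_pos.trans_le hM
  have hn : (0 : ℝ) < n := by exact_mod_cast hk1.trans hkn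
  have hkn' : (k : ℝ) ≤ n := by exact_mod_cast hkn
  have hs1 : (k : ℝ) / (M * n) ≤ 1 := by rw [div_le_one (by positivity)]; nlinarith
  have hp i := measureReal_preimage_Iic_of_map_eq (hmeas i) (hunif i) (by positivity) hs1
  have hchernoff := measureReal_ecount_ge_le_exp (n := n) hmeas hindep hp (Real.log_nonneg hM) k
  simp only [Nat.cast_le] at hchernoff
  refine hchernoff.trans ?_
  have hpow : (Real.exp 1 / M) ^ k = Real.exp (k * (1 - Real.log M)) := by
    rw [Real.exp_nat_mul, Real.exp_sub, Real.exp_log hM0]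
  have hmean : n * (k / (M * n)) * (Real.exp (Real.log M) - 1) = k - k / M := by
    rw [Real.exp_log hM0]; field_simp
  rw [hpow, hmean, Real.exp_le_exp]
  nlinarith [div_nonneg (Nat.cast_nonneg k) hM0.le]

lemma measureReal_ecount_lt_le_pow (hmeas : ∀ i, Measurable (U i)) (hindep : iIndepFun U P)
    (hunif : ∀ i, P.map (U i) = volume.restrict (Ioo 0 1)) (hM : 1 ≤ M) (hk : 1 ≤ k)
    (hkM : (k : ℝ) * M ≤ n) :
    P.real {ω | ecount (U · ω) n (M * k / n) < k} ≤ (M * Real.exp (1 - M)) ^ k := by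
  have hM0 : 0 < M := one_pos.trans_le hM
  have hk' : (1 : ℝ) ≤ k := by exact_mod_cast hk
  have hn : (0 : ℝ) < n := by nlinarith
  have hs1 : M * k / n ≤ 1 := by rw [div_le_one hn]; linarith
  have hp i := measureReal_preimage_Iic_of_map_eq (hmeas i) (hunif i) (by positivity) hs1
  have hchernoff := measureReal_ecount_le_le_exp (n := n) hmeas hindep hp
    (neg_nonpos.2 (Real.log_nonneg hM)) (k - 1)
  have hevent : {ω | ecount (U · ω) n (M * k / n) < k}
      = {ω | (ecount (U · ω) n (M * k / n) : ℝ) ≤ k - 1} := by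
    ext ω
    change ecount (U · ω) n (M * k / n) < k ↔ (ecount (U · ω) n (M * k / n) : ℝ) ≤ k - 1
    rw [le_sub_iff_add_le, ← Nat.cast_add_one, Nat.cast_le, Nat.add_one_le_iff]
  rw [hevent]
  refine hchernoff.trans ?_
  have hpow : (M * Real.exp (1 - M)) ^ k = Real.exp (k * (Real.log M + (1 - M))) := by
    rw [Real.exp_nat_mul, Real.exp_add, Real.exp_log hM0]
  have hmean : n * (M * k / n) * (Real.exp (-Real.log M) - 1) = k - M * k := by
    rw [Real.exp_neg, Real.exp_log hM0]; field_simp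
  rw [hpow, hmean, Real.exp_le_exp]
  nlinarith [Real.log_nonneg hM]

lemma measureReal_not_wellSpread_le (hmeas : ∀ i, Measurable (U i)) (hindep : iIndepFun U P)
    (hunif : ∀ i, P.map (U i) = volume.restrict (Ioo 0 1)) (hM : 1 ≤ M)
    (hr₁ : Real.exp 1 / M < 1) (hr₂ : M * Real.exp (1 - M) < 1) (n : ℕ) :
    P.real {ω | ¬ WellSpread (U · ω) n M} ≤
      Real.exp 1 / M / (1 - Real.exp 1 / M) + M * Real.exp (1 - M) / (1 - M * Real.exp (1 - M)) := by
  set low := (Finset.Icc 1 n).filter fun k : ℕ => (k : ℝ) * M ≤ n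
  have hsub : {ω | ¬ WellSpread (U · ω) n M} ⊆ {ω | ¬ ∀ i < n, U i ω ∈ Ioo 0 1}
      ∪ (⋃ k ∈ Finset.Icc 1 n, {ω | k ≤ ecount (U · ω) n (k / (M * n))})
      ∪ ⋃ k ∈ low, {ω | ecount (U · ω) n (M * k / n) < k} := by
    intro ω hω
    by_contra hc
    simp only [mem_union, mem_iUnion, mem_ofPred_eq, not_or, not_exists, not_not, not_lt, not_le,
      low, Finset.mem_filter] at hc
    exact hω ⟨hc.1.1, fun k hk => hc.1.2 k hk, fun k hk hkM => hc.2 k ⟨hk, hkM⟩⟩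
  have hM0 : 0 < M := one_pos.trans_le hM
  calc P.real {ω | ¬ WellSpread (U · ω) n M}
      ≤ P.real {ω | ¬ ∀ i < n, U i ω ∈ Ioo 0 1}
        + P.real (⋃ k ∈ Finset.Icc 1 n, {ω | k ≤ ecount (U · ω) n (k / (M * n))})
        + P.real (⋃ k ∈ low, {ω | ecount (U · ω) n (M * k / n) < k}) :=
        (measureReal_mono hsub).trans <|
          (measureReal_union_le _ _).trans (add_le_add_left (measureReal_union_le _ _) _)
    _ ≤ 0 + ∑ k ∈ Finset.Icc 1 n, (Real.exp 1 / M) ^ k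
        + ∑ k ∈ low, (M * Real.exp (1 - M)) ^ k := by
        gcongr
        · exact (measureReal_exists_notMem_Ioo hmeas hunif n).le
        · exact (measureReal_biUnion_finset_le _ _).trans <| Finset.sum_le_sum fun k hk =>
            measureReal_ecount_ge_le_pow hmeas hindep hunif hM hk
        · refine (measureReal_biUnion_finset_le _ _).trans <| Finset.sum_le_sum fun k hk => ?_
          obtain ⟨hk, hkM⟩ := Finset.mem_filter.1 hk
          exact measureReal_ecount_lt_le_pow hmeas hindep hunif hM (Finset.mem_Icc.1 hk).1 hkM
    _ ≤ 0 + ∑ k ∈ Finset.Icc 1 n, (Real.exp 1 / M) ^ k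
        + ∑ k ∈ Finset.Icc 1 n, (M * Real.exp (1 - M)) ^ k := by
        gcongr
        exact Finset.filter_subset _ _
    _ ≤ _ := by
        rw [zero_add]
        gcongr
        · exact sum_Icc_pow_le (by positivity) hr₁ n
        · exact sum_Icc_pow_le (by positivity) hr₂ n

lemma tendsto_mul_exp_one_sub_atTop :
    Tendsto (fun M : ℝ => M * Real.exp (1 - M)) atTop (𝓝 0) := by
  have := (Real.tendsto_pow_mul_exp_neg_atTop_nhds_zero 1).const_mul (Real.exp 1)
  rw [mul_zero] at this
  refine this.congr fun M => ?_
  rw [pow_one, sub_eq_add_neg, Real.exp_add]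
  ring

lemma tendsto_wellSpread_bound :
    Tendsto (fun M : ℝ => Real.exp 1 / M / (1 - Real.exp 1 / M)
      + M * Real.exp (1 - M) / (1 - M * Real.exp (1 - M))) atTop (𝓝 0) := by
  have hg : Tendsto (fun r : ℝ => r / (1 - r)) (𝓝 0) (𝓝 0) := by
    have : ContinuousAt (fun r : ℝ => r / (1 - r)) 0 := by fun_prop (disch := norm_num)
    simpa using this.tendsto
  simpa using (hg.comp (tendsto_const_nhds.div_atTop tendsto_id)).add
    (hg.comp tendsto_mul_exp_one_sub_atTop)

lemma exists_forall_measureReal_not_wellSpread_le (hmeas : ∀ i, Measurable (U i))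
    (hindep : iIndepFun U P) (hunif : ∀ i, P.map (U i) = volume.restrict (Ioo 0 1))
    {ε : ℝ} (hε : 0 < ε) : ∃ M, 1 ≤ M ∧ ∀ n, P.real {ω | ¬ WellSpread (U · ω) n M} ≤ ε := by
  obtain ⟨M, hM, hr₁, hr₂, hbound⟩ := ((eventually_ge_atTop 1).and
    (((tendsto_const_nhds.div_atTop tendsto_id).eventually (gt_mem_nhds one_pos)).and
    ((tendsto_mul_exp_one_sub_atTop.eventually (gt_mem_nhds one_pos)).and
    (tendsto_wellSpread_bound.eventually (ge_mem_nhds hε))))).exists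
  exact ⟨M, hM, fun n => (measureReal_not_wellSpread_le hmeas hindep hunif hM hr₁ hr₂ n).trans hbound⟩

end Probability

lemma isBigOp_of_forall_eventually {Ω : Type*} [MeasurableSpace Ω] {P : Measure Ω}
    [IsFiniteMeasure P] {R : ℕ → Ω → ℝ}
    (h : ∀ ε > 0, ∃ K > 0, ∀ᶠ n in atTop, P.real {ω | K < |R n ω|} ≤ ε) : IsBigOp P R := by
  intro ε hε
  obtain ⟨K, hK, hev⟩ := h (ε / 2) (half_pos hε)
  refine ⟨K, hK, (limsup_le_of_le (by isBoundedDefault) ?_).trans_lt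
    ((ENNReal.ofReal_lt_ofReal_iff hε).2 (half_lt_self hε))⟩
  filter_upwards [hev] with n hn
  rw [← ofReal_measureReal]
  exact ENNReal.ofReal_le_ofReal hn

theorem statement4_general {Ω : Type*} [MeasurableSpace Ω] (P : Measure Ω) [IsProbabilityMeasure P]
    (U : ℕ → Ω → ℝ) (hUmeas : ∀ i, Measurable (U i))
    (hUindep : iIndepFun U P)
    (hUunif : ∀ i, P.map (U i) = volume.restrict (Set.Ioo 0 1))
    (a : ℝ) (ha0 : 0 < a) :
    IsBigOp P (fun n ω => ⨆ t : Set.Icc (a / (n : ℝ)) 1,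
        max ((t : ℝ) / ecdf (fun i => U i ω) n t) (ecdf (fun i => U i ω) n t / (t : ℝ))) ∧
    IsBigOp P (fun n ω => ⨆ t : Set.Icc (a / (n : ℝ)) 1,
        max ((t : ℝ) / equant (fun i => U i ω) n t) (equant (fun i => U i ω) n t / (t : ℝ))) := by
  constructor <;> refine isBigOp_of_forall_eventually fun ε hε => ?_ <;>
    obtain ⟨M, hM, hP⟩ := exists_forall_measureReal_not_wellSpread_le hUmeas hUindep hUunif hε <;>
    refine ⟨M * (2 + 1 / a), by positivity, (eventually_ne_atTop 0).mono fun n hn =>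
      (measureReal_mono ?_).trans (hP n)⟩
  · exact fun ω hω hspread => (hspread.abs_iSup_ecdf_ratio_le hM ha0 hn).not_gt hω
  · exact fun ω hω hspread => (hspread.abs_iSup_equant_ratio_le hM ha0 hn).not_gt hω

/-- For i.i.d. uniform-(0,1) random variables and every `0 < a < 1`, the sequences
`sup_{a/n ≤ t ≤ 1} max(t/𝕌ₙ(t), 𝕌ₙ(t)/t)` and `sup_{a/n ≤ t ≤ 1} max(t/𝕍ₙ(t), 𝕍ₙ(t)/t)`
are `O_p(1)`. -/
theorem statement4 {Ω : Type*} [MeasurableSpace Ω] (P : Measure Ω) [IsProbabilityMeasure P]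
    (U : ℕ → Ω → ℝ) (hUmeas : ∀ i, Measurable (U i))
    (hUindep : iIndepFun U P)
    (hUunif : ∀ i, P.map (U i) = volume.restrict (Set.Ioo 0 1))
    (a : ℝ) (ha0 : 0 < a) (ha1 : a < 1) :
    IsBigOp P (fun n ω => ⨆ t : Set.Icc (a / (n : ℝ)) 1,
        max ((t : ℝ) / ecdf (fun i => U i ω) n t) (ecdf (fun i => U i ω) n t / (t : ℝ))) ∧
    IsBigOp P (fun n ω => ⨆ t : Set.Icc (a / (n : ℝ)) 1,
        max ((t : ℝ) / equant (fun i => U i ω) n t) (equant (fun i => U i ω) n t / (t : ℝ))) :=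
  statement4_general P U hUmeas hUindep hUunif a ha0
end

section
/- Let F be a cumulative distribution function on [0,∞) whose tail F̄ := 1−F is regularly varying at infinity with index −1/γ₁ for some γ₁>0, i.e. for every x>0, F̄(tx)/F̄(t) → x^{−1/γ₁} as t→∞. Then (1/F̄(t)) · ∫_{(t,∞)} log(x/t) dF(x) → γ₁ as t→∞, where the integral is with respect to the Lebesgue–Stieltjes measure of F. -/
open MeasureTheory Filter Set

def RegVary (f : ℝ → ℝ) (ρ : ℝ) : Prop :=
  ∀ x : ℝ, 0 < x → Tendsto (fun t => f (t * x) / f t) atTop (nhds (x ^ ρ))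

/-!
Substituting `x = t * exp s` (the layer-cake formula), the normalized logarithmic moment becomes
`∫₀^∞ F̄(t eˢ) / F̄(t) ds`. By regular variation the integrand tends to `exp (-s / γ₁)`, whose
integral is `γ₁`. Dominated convergence applies thanks to a Potter-type bound
`F̄(t eˢ) ≤ C exp (-s / (2 γ₁)) F̄(t)` for large `t`, which follows from
`F̄(t e) ≤ exp (-1 / (2 γ₁)) F̄(t)`, iterated and combined with the monotonicity of `F̄`.
-/

open Real Topology

lemma le_pow_mul_of_forall_le_mul {g : ℝ → ℝ} {T x c : ℝ} (hT : 0 ≤ T) (hx : 1 ≤ x)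
    (hc : 0 ≤ c) (h : ∀ t, T ≤ t → g (t * x) ≤ c * g t) (n : ℕ) {t : ℝ} (ht : T ≤ t) :
    g (t * x ^ n) ≤ c ^ n * g t := by
  induction n with
  | zero => simp
  | succ n ih =>
    have hle : T ≤ t * x ^ n := ht.trans (le_mul_of_one_le_right (hT.trans ht) (one_le_pow₀ hx))
    calc g (t * x ^ (n + 1)) = g (t * x ^ n * x) := by rw [pow_succ, mul_assoc]
      _ ≤ c * g (t * x ^ n) := h _ hle
      _ ≤ c * (c ^ n * g t) := mul_le_mul_of_nonneg_left ih hc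
      _ = c ^ (n + 1) * g t := by ring

namespace RegVary

variable {f : ℝ → ℝ} {ρ : ℝ}

lemma eventually_le_mul (hf : RegVary f ρ) (hpos : ∀ t, 0 < f t) {x c : ℝ} (hx : 0 < x)
    (hc : x ^ ρ < c) : ∀ᶠ t in atTop, f (t * x) ≤ c * f t := by
  filter_upwards [(hf x hx).eventually (eventually_le_nhds hc)] with t ht
  rwa [div_le_iff₀ (hpos t)] at ht

/-- A Potter-type bound, obtained by iterating `f (t * e) ≤ e ^ (ρ / 2) * f t`. -/
lemma eventually_le_exp_mul (hf : RegVary f ρ) (hρ : ρ < 0) (hpos : ∀ t, 0 < f t)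
    (hanti : Antitone f) :
    ∀ᶠ t in atTop, ∀ s, 0 ≤ s → f (t * exp s) ≤ exp (-(ρ / 2)) * exp (ρ / 2 * s) * f t := by
  have hstep : exp 1 ^ ρ < exp (ρ / 2) := by
    rw [← exp_mul, one_mul, exp_lt_exp]; linarith
  obtain ⟨T, hT⟩ := eventually_atTop.mp (hf.eventually_le_mul hpos (exp_pos 1) hstep)
  filter_upwards [eventually_ge_atTop (max T 0)] with t ht s hs
  have hpow := le_pow_mul_of_forall_le_mul (le_max_right T 0) (one_le_exp zero_le_one)
    (exp_pos _).le (fun t ht => hT t ((le_max_left T 0).trans ht)) ⌊s⌋₊ ht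
  have hfloor : s - 1 < ⌊s⌋₊ := by linarith [Nat.lt_floor_add_one s]
  calc f (t * exp s) ≤ f (t * exp 1 ^ ⌊s⌋₊) := by
        refine hanti (mul_le_mul_of_nonneg_left ?_ ((le_max_right T 0).trans ht))
        rw [← exp_nat_mul, mul_one, exp_le_exp]
        exact Nat.floor_le hs
    _ ≤ exp (ρ / 2) ^ ⌊s⌋₊ * f t := hpow
    _ ≤ exp (-(ρ / 2)) * exp (ρ / 2 * s) * f t := by
        rw [← exp_nat_mul, ← exp_add]
        gcongr ?_ * _
        · exact (hpos t).le
        · exact exp_le_exp.mpr (by nlinarith)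

lemma tendsto_setIntegral_div (hf : RegVary f ρ) (hρ : ρ < 0) (hpos : ∀ t, 0 < f t)
    (hanti : Antitone f) :
    Tendsto (fun t => ∫ s in Ioi 0, f (t * exp s) / f t) atTop (𝓝 (-1 / ρ)) := by
  have hlim : ∫ s in Ioi 0, exp (ρ * s) = -1 / ρ := by
    rw [integral_exp_mul_Ioi hρ, mul_zero, exp_zero]
  rw [← hlim]
  refine tendsto_integral_filter_of_dominated_convergence _ ?_ ?_
    ((integrableOn_exp_mul_Ioi (by linarith : ρ / 2 < 0) 0).const_mul (exp (-(ρ / 2)))) ?_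
  · exact .of_forall fun t =>
      ((hanti.measurable.comp (measurable_const.mul measurable_exp)).div_const _).aestronglyMeasurable
  · filter_upwards [hf.eventually_le_exp_mul hρ hpos hanti] with t ht
    refine (ae_restrict_iff' measurableSet_Ioi).mpr (.of_forall fun s hs => ?_)
    rw [norm_of_nonneg (div_nonneg (hpos _).le (hpos _).le), div_le_iff₀ (hpos t)]
    exact ht s (le_of_lt hs)
  · refine .of_forall fun s => ?_
    simpa [← exp_mul, mul_comm] using hf (exp s) (exp_pos s)

end RegVary

lemma setOf_lt_log_div_inter_Ioi {s t : ℝ} (hs : 0 ≤ s) (ht : 0 < t) :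
    {x | s < log (x / t)} ∩ Ioi t = Ioi (t * exp s) := by
  ext x
  simp only [mem_inter_iff, mem_ofPred_eq, mem_Ioi]
  have hts : t ≤ t * exp s := le_mul_of_one_le_right ht.le (one_le_exp hs)
  constructor
  · rintro ⟨hlog, hx⟩
    rwa [lt_log_iff_exp_lt (div_pos (ht.trans hx) ht), lt_div_iff₀ ht, mul_comm] at hlog
  · intro hx
    have hx' : t < x := lt_of_le_of_lt hts hx
    rw [lt_log_iff_exp_lt (div_pos (ht.trans hx') ht), lt_div_iff₀ ht, mul_comm]
    exact ⟨hx, hx'⟩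

lemma measurable_log_div_const (t : ℝ) : Measurable fun x => log (x / t) :=
  measurable_log.comp (measurable_div_const t)

lemma log_div_nonneg_ae_restrict_Ioi (μ : Measure ℝ) {t : ℝ} (ht : 0 < t) :
    0 ≤ᵐ[μ.restrict (Ioi t)] fun x => log (x / t) :=
  (ae_restrict_iff' measurableSet_Ioi).mpr <| .of_forall fun _ hx =>
    log_nonneg ((one_le_div ht).mpr (le_of_lt hx))

lemma lintegral_Ioi_log_div_eq (μ : Measure ℝ) {t : ℝ} (ht : 0 < t) :
    ∫⁻ x in Ioi t, ENNReal.ofReal (log (x / t)) ∂μ = ∫⁻ s in Ioi 0, μ (Ioi (t * exp s)) := by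
  have hmeas := measurable_log_div_const t
  rw [lintegral_eq_lintegral_meas_lt _ (log_div_nonneg_ae_restrict_Ioi μ ht) hmeas.aemeasurable]
  refine setLIntegral_congr_fun measurableSet_Ioi fun s hs => ?_
  rw [Measure.restrict_apply (measurableSet_lt measurable_const hmeas),
    setOf_lt_log_div_inter_Ioi (le_of_lt hs) ht]

/-- No integrability assumption is needed: both sides are `toReal` of the same lower integral. -/
lemma setIntegral_Ioi_log_div_eq {μ : Measure ℝ} {t : ℝ} (ht : 0 < t) (hμ : μ (Ioi t) ≠ ⊤) :
    ∫ x in Ioi t, log (x / t) ∂μ = ∫ s in Ioi 0, μ.real (Ioi (t * exp s)) := by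
  have htail_ne_top : ∀ s, 0 ≤ s → μ (Ioi (t * exp s)) ≠ ⊤ := fun s hs =>
    ne_top_of_le_ne_top hμ (measure_mono (Ioi_subset_Ioi
      (le_mul_of_one_le_right ht.le (one_le_exp hs))))
  have htail_meas : Measurable fun s => μ (Ioi (t * exp s)) :=
    Antitone.measurable fun a b hab => measure_mono (Ioi_subset_Ioi
      (mul_le_mul_of_nonneg_left (exp_le_exp.mpr hab) ht.le))
  rw [integral_eq_lintegral_of_nonneg_ae, integral_eq_lintegral_of_nonneg_ae,
    lintegral_Ioi_log_div_eq μ ht]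
  · congr 1
    refine setLIntegral_congr_fun measurableSet_Ioi fun s hs => ?_
    exact (ENNReal.ofReal_toReal (htail_ne_top s (le_of_lt hs))).symm
  · exact .of_forall fun s => measureReal_nonneg
  · exact htail_meas.ennreal_toReal.aestronglyMeasurable
  · exact log_div_nonneg_ae_restrict_Ioi μ ht
  · exact (measurable_log_div_const t).aestronglyMeasurable

theorem statement10_general (F : StieltjesFunction ℝ)
    (hFtop : Tendsto F atTop (nhds 1))
    (hFbarpos : ∀ t : ℝ, 0 < 1 - F t)
    (γ₁ : ℝ) (hγ₁ : 0 < γ₁)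
    (hRV : RegVary (fun t => 1 - F t) (-1 / γ₁)) :
    Tendsto (fun t => (∫ x in Set.Ioi t, Real.log (x / t) ∂F.measure) / (1 - F t))
      atTop (nhds γ₁) := by
  have hanti : Antitone fun t => 1 - F t := fun a b hab => sub_le_sub_left (F.mono hab) 1
  have hlim := hRV.tendsto_setIntegral_div (div_neg_of_neg_of_pos neg_one_lt_zero hγ₁)
    hFbarpos hanti
  rw [show -1 / (-1 / γ₁) = γ₁ by field_simp] at hlim
  refine hlim.congr' ?_
  filter_upwards [eventually_gt_atTop 0] with t ht
  rw [setIntegral_Ioi_log_div_eq ht (by simp [F.measure_Ioi hFtop]), ← integral_div]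
  refine setIntegral_congr_fun measurableSet_Ioi fun s _ => ?_
  rw [measureReal_def, F.measure_Ioi hFtop, ENNReal.toReal_ofReal (hFbarpos _).le]

/-- If `F` is a cdf on `[0,∞)` whose tail `F̄ = 1 − F` is regularly varying at infinity with
index `−1/γ₁`, `γ₁ > 0`, then `(1/F̄(t)) ∫_{(t,∞)} log(x/t) dF(x) → γ₁` as `t → ∞`. -/
theorem statement10 (F : StieltjesFunction ℝ)
    (hF0 : ∀ z < (0 : ℝ), F z = 0)
    (hFtop : Tendsto F atTop (nhds 1))
    (hFbarpos : ∀ t : ℝ, 0 < 1 - F t)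
    (γ₁ : ℝ) (hγ₁ : 0 < γ₁)
    (hRV : RegVary (fun t => 1 - F t) (-1 / γ₁)) :
    Tendsto (fun t => (∫ x in Set.Ioi t, Real.log (x / t) ∂F.measure) / (1 - F t))
      atTop (nhds γ₁) :=
  statement10_general F hFtop hFbarpos γ₁ hγ₁ hRV
end

section
/- Let n ≥ 1, 1 ≤ k < n, let 0 < z₁ ≤ z₂ ≤ … ≤ zₙ be positive reals and d₁,…,dₙ ∈ {0,1}. Then (1/n)·Σ_{i=n−k+1}^n d_i · log(z_i/z_{n−k}) · exp( Σ_{j=1}^i (1−d_j)/(n−j+1) ) / ∏_{j=1}^{n−k} exp( −d_j/(n−j+1) ) = Σ_{i=1}^k a_i · log(z_{n−i+1}/z_{n−k}), where a_i := n^{−1} · d_{n−i+1} · ( ∏_{j=i}^n e^{1/j} ) · ( ∏_{j=i}^k e^{−d_{n−j+1}/j} ). -/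
/-!
Both sides are the same sum, reindexed by `i ↦ n - i + 1`. Termwise, the exponent of the
left side, `∑_{j ≤ n-i+1} (1 - d j)/(n - j + 1) + ∑_{j ≤ n-k} d j/(n - j + 1)`, loses the
`d j` with `j ≤ n - k` and, after reflecting `j ↦ n - j + 1`, becomes
`∑_{j=i}^{n} 1/j - ∑_{j=i}^{k} d (n - j + 1)/j`, the exponent of `a_i`.
-/

open Finset

theorem sum_Icc_reflect {M : Type*} [AddCommMonoid M] (f : ℕ → M) {a b n : ℕ} (ha : a ≤ n)
    (hb : b ≤ n) :
    ∑ j ∈ Icc a b, f (n - j + 1) = ∑ j ∈ Icc (n - b + 1) (n - a + 1), f j := by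
  refine sum_nbij' (fun j ↦ n - j + 1) (fun j ↦ n + 1 - j) ?_ ?_ ?_ ?_ fun _ _ ↦ rfl <;>
    intro j <;> simp only [mem_Icc] <;> omega

theorem natCast_sub_add_one {n j : ℕ} (hj : j ≤ n) : ((n - j + 1 : ℕ) : ℝ) = n - j + 1 := by
  push_cast [Nat.cast_sub hj]; ring

theorem sum_Icc_one_div_reflect {n i : ℕ} (hi : 1 ≤ i) (hin : i ≤ n) :
    ∑ j ∈ Icc 1 (n - i + 1), 1 / ((n : ℝ) - j + 1) = ∑ j ∈ Icc i n, 1 / (j : ℝ) := by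
  have := sum_Icc_reflect (fun m : ℕ ↦ 1 / (m : ℝ)) (a := 1) (b := n - i + 1) (n := n)
    (by omega) (by omega)
  rw [show n - (n - i + 1) + 1 = i by omega, show n - 1 + 1 = n by omega] at this
  rw [← this]
  refine sum_congr rfl fun j hj ↦ ?_
  rw [natCast_sub_add_one (by simp only [mem_Icc] at hj; omega)]

theorem sum_Icc_div_reflect (d : ℕ → ℝ) {n i k : ℕ} (hi : 1 ≤ i) (hik : i ≤ k)
    (hkn : k ≤ n) :
    ∑ j ∈ Icc (n - k + 1) (n - i + 1), d j / ((n : ℝ) - j + 1)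
      = ∑ j ∈ Icc i k, d (n - j + 1) / (j : ℝ) := by
  have := sum_Icc_reflect (fun m : ℕ ↦ d (n - m + 1) / (m : ℝ)) (a := n - k + 1)
    (b := n - i + 1) (n := n) (by omega) (by omega)
  rw [show n - (n - i + 1) + 1 = i by omega, show n - (n - k + 1) + 1 = k by omega] at this
  rw [← this]
  refine sum_congr rfl fun j hj ↦ ?_
  simp only [mem_Icc] at hj
  rw [natCast_sub_add_one (by omega), show n - (n - j + 1) + 1 = j by omega]

theorem sum_censored_exponent_eq (d : ℕ → ℝ) {n i k : ℕ} (hi : 1 ≤ i) (hik : i ≤ k)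
    (hkn : k ≤ n) :
    ∑ j ∈ Icc 1 (n - i + 1), (1 - d j) / ((n : ℝ) - j + 1)
        - ∑ j ∈ Icc 1 (n - k), -d j / ((n : ℝ) - j + 1)
      = ∑ j ∈ Icc i n, 1 / (j : ℝ) + ∑ j ∈ Icc i k, -d (n - j + 1) / (j : ℝ) := by
  have hsplit : Icc 1 (n - i + 1) = Icc 1 (n - k) ∪ Icc (n - k + 1) (n - i + 1) := by
    ext x; simp only [mem_Icc, mem_union]; omega
  have hdisj : Disjoint (Icc 1 (n - k)) (Icc (n - k + 1) (n - i + 1)) := by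
    rw [disjoint_left]; simp only [mem_Icc]; omega
  simp only [sub_div, neg_div, sum_sub_distrib, sum_neg_distrib]
  rw [sum_Icc_one_div_reflect hi (by omega), hsplit, sum_union hdisj,
    sum_Icc_div_reflect d hi hik hkn]
  ring

theorem statement12_general (n k : ℕ) (hkn : k < n)
    (z d : ℕ → ℝ) :
    (1 / (n : ℝ)) *
      (∑ i ∈ Finset.Icc (n - k + 1) n,
          d i * Real.log (z i / z (n - k))
            * Real.exp (∑ j ∈ Finset.Icc 1 i, (1 - d j) / ((n : ℝ) - (j : ℝ) + 1)))
      / (∏ j ∈ Finset.Icc 1 (n - k), Real.exp (-(d j) / ((n : ℝ) - (j : ℝ) + 1)))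
    = ∑ i ∈ Finset.Icc 1 k,
        ((1 / (n : ℝ)) * d (n - i + 1)
            * (∏ j ∈ Finset.Icc i n, Real.exp (1 / (j : ℝ)))
            * (∏ j ∈ Finset.Icc i k, Real.exp (-(d (n - j + 1)) / (j : ℝ))))
          * Real.log (z (n - i + 1) / z (n - k)) := by
  simp only [← Real.exp_sum]
  rw [mul_sum, sum_div, show Icc (n - k + 1) n = Icc (n - k + 1) (n - 1 + 1) by
    rw [Nat.sub_add_cancel (by omega)], ← sum_Icc_reflect _ (by omega) hkn.le]
  refine sum_congr rfl fun i hi ↦ ?_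
  simp only [mem_Icc] at hi
  rw [mul_assoc (1 / (n : ℝ) * _), ← Real.exp_add,
    ← sum_censored_exponent_eq d hi.1 hi.2 hkn.le, Real.exp_sub]
  ring

/-- The algebraic identity bringing the Nelson–Aalen-based Hill-type estimator into an
explicit weighted-sum form.  Here `z i` plays the role of the ordered observation `Z_{i:n}`
(indices `1,…,n`) and `d i` the role of the concomitant censoring indicator `δ_{[i:n]}`. -/
theorem statement12 (n k : ℕ) (hn : 1 ≤ k) (hkn : k < n)
    (z d : ℕ → ℝ) (hzpos : ∀ i, 1 ≤ i → i ≤ n → 0 < z i)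
    (hzmono : ∀ i j, 1 ≤ i → i ≤ j → j ≤ n → z i ≤ z j)
    (hd : ∀ j, d j = 0 ∨ d j = 1) :
    (1 / (n : ℝ)) *
      (∑ i ∈ Finset.Icc (n - k + 1) n,
          d i * Real.log (z i / z (n - k))
            * Real.exp (∑ j ∈ Finset.Icc 1 i, (1 - d j) / ((n : ℝ) - (j : ℝ) + 1)))
      / (∏ j ∈ Finset.Icc 1 (n - k), Real.exp (-(d j) / ((n : ℝ) - (j : ℝ) + 1)))
    = ∑ i ∈ Finset.Icc 1 k,
        ((1 / (n : ℝ)) * d (n - i + 1)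
            * (∏ j ∈ Finset.Icc i n, Real.exp (1 / (j : ℝ)))
            * (∏ j ∈ Finset.Icc i k, Real.exp (-(d (n - j + 1)) / (j : ℝ))))
          * Real.log (z (n - i + 1) / z (n - k)) :=
  statement12_general n k hkn z d
end

section
/- Assume F̄ and Ḡ are regularly varying at infinity with respective indices −1/γ₁ and −1/γ₂, γ₁,γ₂>0, and set γ := γ₁γ₂/(γ₁+γ₂), p := γ/γ₁, H̄ := F̄·Ḡ and H̄⁽¹⁾(z) := ∫_{(z,∞)} Ḡ dF. Then lim_{z→∞} sup_{w ≥ 1} | H̄⁽¹⁾(zw)/H̄(z) − p·w^{−1/γ} | = 0. -/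
open MeasureTheory Filter Set

/-!
Write `R(t) = H̄⁽¹⁾(t) / H̄(t) ∈ [0, 1]`. Splitting `(t, ∞) = (t, tr] ∪ (tr, ∞)` and bounding `Ḡ`
on `(t, tr]` between `Ḡ(tr)` and `Ḡ(t)` gives, for each `r > 1`, two affine inequalities between
`R(t)` and `R(tr)` whose coefficients converge by regular variation. In the `limsup` and the
`liminf` they become `limsup R · (1 - r^(-1/γ)) ≤ 1 - r^(-1/γ₁)` and
`liminf R · (1 - r^(-1/γ)) ≥ r^(-1/γ₂) (1 - r^(-1/γ₁))`, and letting `r → 1⁺` squeezes both to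
`p`. Regular variation of `H̄` turns `R → p` into the pointwise limit `p w^(-1/γ)`; since both
sides decrease in `w` and the limit is continuous and vanishes at infinity, comparing on a finite
grid of `w`'s makes the convergence uniform (Pólya's argument).
-/

open Topology

theorem RegVary.mul {f g : ℝ → ℝ} {ρ σ : ℝ} (hf : RegVary f ρ) (hg : RegVary g σ) :
    RegVary (fun t => f t * g t) (ρ + σ) := by
  intro x hx
  rw [Real.rpow_add hx]
  simpa only [mul_div_mul_comm] using (hf x hx).mul (hg x hx)

theorem RegVary.tendsto_comp_mul_div {f h : ℝ → ℝ} {ρ c x : ℝ} (hh : RegVary h ρ)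
    (hh0 : ∀ᶠ t in atTop, h t ≠ 0) (hfh : Tendsto (fun t => f t / h t) atTop (𝓝 c))
    (hx : 0 < x) :
    Tendsto (fun t => f (t * x) / h t) atTop (𝓝 (c * x ^ ρ)) := by
  have hmul : Tendsto (fun t => t * x) atTop atTop := tendsto_id.atTop_mul_const hx
  refine ((hfh.comp hmul).mul (hh x hx)).congr' ?_
  filter_upwards [hmul.eventually hh0] with t ht
  exact div_mul_div_cancel₀ ht

theorem limsup_le_add_mul_limsup {α : Type*} {l : Filter α} [l.NeBot] {u c d : α → ℝ}
    {s : α → α} {c₀ d₀ : ℝ} (hs : Tendsto s l l) (hu : IsBoundedUnder (· ≤ ·) l u)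
    (hu' : IsBoundedUnder (· ≥ ·) l u) (hc : Tendsto c l (𝓝 c₀)) (hd : Tendsto d l (𝓝 d₀))
    (hd0 : ∀ᶠ x in l, 0 ≤ d x) (h : ∀ᶠ x in l, u x ≤ c x + d x * u (s x)) :
    limsup u l ≤ c₀ + d₀ * limsup u l := by
  set L := limsup u l
  have hd₀ : 0 ≤ d₀ := ge_of_tendsto hd hd0
  refine le_of_forall_pos_le_add fun ε hε => ?_
  obtain ⟨η, hη, hηε⟩ : ∃ η > 0, (d₀ + 1) * η = ε :=
    ⟨ε / (d₀ + 1), by positivity, by field_simp⟩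
  have hus : ∀ᶠ x in l, u (s x) < L + η :=
    hs.eventually (eventually_lt_of_limsup_lt (lt_add_of_pos_right L hη) hu)
  have hlim : ∀ᶠ x in l, c x + d x * (L + η) < c₀ + d₀ * (L + η) + η :=
    (hc.add (hd.mul_const _)).eventually (eventually_lt_nhds (lt_add_of_pos_right _ hη))
  have hL : L ≤ c₀ + d₀ * (L + η) + η := by
    refine limsup_le_of_le hu'.isCoboundedUnder_le ?_
    filter_upwards [h, hd0, hus, hlim] with x hx hdx hsx hcx
    calc u x ≤ c x + d x * u (s x) := hx
      _ ≤ c x + d x * (L + η) := by gcongr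
      _ ≤ c₀ + d₀ * (L + η) + η := hcx.le
  linarith

theorem add_mul_liminf_le_liminf {α : Type*} {l : Filter α} [l.NeBot] {u c d : α → ℝ}
    {s : α → α} {c₀ d₀ : ℝ} (hs : Tendsto s l l) (hu : IsBoundedUnder (· ≤ ·) l u)
    (hu' : IsBoundedUnder (· ≥ ·) l u) (hc : Tendsto c l (𝓝 c₀)) (hd : Tendsto d l (𝓝 d₀))
    (hd0 : ∀ᶠ x in l, 0 ≤ d x) (h : ∀ᶠ x in l, c x + d x * u (s x) ≤ u x) :
    c₀ + d₀ * liminf u l ≤ liminf u l := by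
  have hneg : limsup (fun x => -u x) l = -liminf u l :=
    (Antitone.map_liminf_of_continuousAt (f := fun y : ℝ => -y) (fun _ _ h => neg_le_neg h) u
      continuous_neg.continuousAt hu.isCoboundedUnder_ge hu').symm
  have := limsup_le_add_mul_limsup (u := fun x => -u x) (c := fun x => -c x) hs
    (isBoundedUnder_le_neg.2 hu') (isBoundedUnder_ge_neg.2 hu) hc.neg hd hd0
    (h.mono fun x hx => by linarith)
  rw [hneg] at this
  linarith

theorem exists_finset_grid_Icc {g : ℝ → ℝ} {a M ε : ℝ} (hg : ContinuousOn g (Icc a M))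
    (haM : a ≤ M) (hε : 0 < ε) :
    ∃ S : Finset ℝ, (∀ s ∈ S, s ∈ Icc a M) ∧ M ∈ S ∧ ∀ w ∈ Icc a M,
      (∃ s ∈ S, s ≤ w ∧ g s ≤ g w + ε) ∧ (∃ s ∈ S, w ≤ s ∧ g w ≤ g s + ε) := by
  obtain ⟨δ, hδ, hunif⟩ := Metric.uniformContinuousOn_iff_le.1
    (isCompact_Icc.uniformContinuousOn_of_continuous hg) ε hε
  have hclose : ∀ x ∈ Icc a M, ∀ y ∈ Icc a M, |x - y| ≤ δ → g x ≤ g y + ε :=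
    fun x hx y hy hxy => by linarith [(abs_le.1 (hunif x hx y hy hxy)).2]
  set N := ⌈(M - a) / δ⌉₊
  set grid : ℕ → ℝ := fun k => min (a + k * δ) M
  have hgrid : ∀ k, grid k ∈ Icc a M := fun k =>
    ⟨le_min (le_add_of_nonneg_right (by positivity)) haM, min_le_right _ _⟩
  have hmem : ∀ k ≤ N + 1, grid k ∈ (Finset.range (N + 2)).image grid := fun k hk =>
    Finset.mem_image_of_mem grid (Finset.mem_range.2 (by omega))
  have hN : grid N = M := min_eq_right <| by
    have := Nat.le_ceil ((M - a) / δ)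
    rw [div_le_iff₀ hδ] at this
    linarith
  refine ⟨(Finset.range (N + 2)).image grid, ?_, hN ▸ hmem N (by omega), fun w hw => ?_⟩
  · simp only [Finset.mem_image]
    rintro _ ⟨k, -, rfl⟩
    exact hgrid k
  set k := ⌊(w - a) / δ⌋₊
  have hkw : a + k * δ ≤ w := by
    have := Nat.floor_le (div_nonneg (sub_nonneg.2 hw.1) hδ.le)
    rw [le_div_iff₀ hδ] at this
    linarith
  have hwk : w < a + (k + 1) * δ := by
    have := Nat.lt_floor_add_one ((w - a) / δ)
    rw [div_lt_iff₀ hδ] at this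
    linarith
  have hkN : k ≤ N :=
    Nat.floor_le_ceil _ |>.trans (Nat.ceil_mono (by gcongr; exact hw.2))
  have hlo : grid k = a + k * δ := min_eq_left (hkw.trans hw.2)
  have hhi : w ≤ grid (k + 1) := by push_cast [grid]; exact le_min hwk.le hw.2
  have hhi' : grid (k + 1) ≤ a + (k + 1) * δ := by push_cast [grid]; exact min_le_left _ _
  refine ⟨⟨grid k, hmem k (by omega), hlo ▸ hkw, hclose _ (hgrid k) w hw ?_⟩,
    ⟨grid (k + 1), hmem (k + 1) (by omega), hhi, hclose w hw _ (hgrid (k + 1)) ?_⟩⟩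
  all_goals rw [abs_le]; constructor <;> linarith

theorem exists_finset_grid {g : ℝ → ℝ} {a ε : ℝ} (hg : ContinuousOn g (Ici a))
    (hg0 : Tendsto g atTop (𝓝 0)) (hε : 0 < ε) :
    ∃ S : Finset ℝ, (∀ s ∈ S, a ≤ s) ∧ ∀ w, a ≤ w →
      (∃ s ∈ S, s ≤ w ∧ g s ≤ g w + ε) ∧ (g w ≤ ε ∨ ∃ s ∈ S, w ≤ s ∧ g w ≤ g s + ε) := by
  obtain ⟨M₀, hM₀⟩ := Metric.tendsto_atTop.1 hg0 (ε / 2) (half_pos hε)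
  set M := max a M₀
  have hsmall : ∀ w, M ≤ w → |g w| < ε / 2 := fun w hw => by
    simpa only [Real.dist_eq, sub_zero] using hM₀ w (le_of_max_le_right hw)
  obtain ⟨S, hSI, hMS, hS⟩ :=
    exists_finset_grid_Icc (hg.mono Icc_subset_Ici_self) (le_max_left a M₀) hε
  refine ⟨S, fun s hs => (hSI s hs).1, fun w hw => ?_⟩
  rcases le_or_gt M w with hMw | hwM
  · have hgw := abs_lt.1 (hsmall w hMw)
    have hgM := abs_lt.1 (hsmall M le_rfl)
    exact ⟨⟨M, hMS, hMw, by linarith⟩, Or.inl (by linarith)⟩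
  · exact (hS w ⟨hw, hwM.le⟩).imp id Or.inr

theorem tendsto_iSup_abs_sub_of_antitoneOn {ι : Type*} {l : Filter ι} {f : ι → ℝ → ℝ}
    {g : ℝ → ℝ} {a : ℝ} (hf : ∀ᶠ i in l, AntitoneOn (f i) (Ici a))
    (hf0 : ∀ᶠ i in l, ∀ w, a ≤ w → 0 ≤ f i w)
    (hfg : ∀ w, a ≤ w → Tendsto (fun i => f i w) l (𝓝 (g w)))
    (hg : ContinuousOn g (Ici a)) (hg0 : Tendsto g atTop (𝓝 0)) :
    Tendsto (fun i => ⨆ w : {w : ℝ // a ≤ w}, |f i w - g w|) l (𝓝 0) := by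
  rw [NormedAddGroup.tendsto_nhds_zero]
  intro ε hε
  obtain ⟨S, hSa, hS⟩ := exists_finset_grid hg hg0 (by positivity : 0 < ε / 4)
  have hnear : ∀ᶠ i in l, ∀ s ∈ S, |f i s - g s| ≤ ε / 4 :=
    (S.eventually_all).2 fun s hs => ((hfg s (hSa s hs)).eventually
      (Metric.closedBall_mem_nhds (g s) (by positivity : 0 < ε / 4))).mono fun i hi => by
        simpa only [Metric.mem_closedBall, Real.dist_eq] using hi
  filter_upwards [hf, hf0, hnear] with i hanti hnonneg hnear
  have hbound : ∀ w, a ≤ w → |f i w - g w| ≤ ε / 2 := by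
    intro w hw
    obtain ⟨⟨s, hs, hsw, hgs⟩, hlow⟩ := hS w hw
    have hup : f i w ≤ f i s := hanti (hSa s hs) hw hsw
    have hsnear := abs_le.1 (hnear s hs)
    rcases hlow with hgw | ⟨s', hs', hws', hgs'⟩
    · have := hnonneg w hw
      exact abs_le.2 ⟨by linarith, by linarith⟩
    · have hdown : f i s' ≤ f i w := hanti hw (hSa s' hs') hws'
      have hs'near := abs_le.1 (hnear s' hs')
      exact abs_le.2 ⟨by linarith, by linarith⟩
  rw [Real.norm_of_nonneg (Real.iSup_nonneg fun _ => abs_nonneg _)]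
  exact (Real.iSup_le (fun w : {w : ℝ // a ≤ w} => hbound w w.2) (by positivity)).trans_lt
    (by linarith)

theorem tendsto_one_sub_rpow_div_one_sub_rpow {c₁ c₂ : ℝ} (hc₂ : c₂ ≠ 0) :
    Tendsto (fun r : ℝ => (1 - r ^ c₁) / (1 - r ^ c₂)) (𝓝[>] 1) (𝓝 (c₁ / c₂)) := by
  have hslope : ∀ c : ℝ, Tendsto (slope (fun x : ℝ => x ^ c) 1) (𝓝[≠] 1) (𝓝 c) := fun c => by
    simpa using (Real.hasDerivAt_rpow_const (x := 1) (p := c) (Or.inl one_ne_zero)).tendsto_slope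
  refine (((hslope c₁).div (hslope c₂) hc₂).mono_left
    (nhdsWithin_mono _ fun r hr => ne_of_gt hr)).congr' ?_
  filter_upwards [self_mem_nhdsWithin] with r (hr : 1 < r)
  have hr1 : r - 1 ≠ 0 := sub_ne_zero.2 (ne_of_gt hr)
  rw [Pi.div_apply, slope_def_field, slope_def_field, Real.one_rpow, Real.one_rpow,
    div_div_div_cancel_right₀ hr1, ← neg_sub, ← neg_sub 1, neg_div_neg_eq]

theorem le_div_add_of_forall_one_lt {ρ₁ ρ₂ A : ℝ} (hρ : ρ₁ + ρ₂ < 0)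
    (h : ∀ r > 1, A ≤ 1 - r ^ ρ₁ + r ^ (ρ₁ + ρ₂) * A) : A ≤ ρ₁ / (ρ₁ + ρ₂) := by
  refine ge_of_tendsto (tendsto_one_sub_rpow_div_one_sub_rpow hρ.ne) ?_
  filter_upwards [self_mem_nhdsWithin] with r (hr : 1 < r)
  rw [le_div_iff₀ (sub_pos.2 (Real.rpow_lt_one_of_one_lt_of_neg hr hρ))]
  linarith [h r hr]

theorem div_add_le_of_forall_one_lt {ρ₁ ρ₂ B : ℝ} (hρ : ρ₁ + ρ₂ < 0)
    (h : ∀ r > 1, r ^ ρ₂ * (1 - r ^ ρ₁) + r ^ (ρ₁ + ρ₂) * B ≤ B) : ρ₁ / (ρ₁ + ρ₂) ≤ B := by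
  have hlim : Tendsto (fun r : ℝ => r ^ ρ₂ * ((1 - r ^ ρ₁) / (1 - r ^ (ρ₁ + ρ₂)))) (𝓝[>] 1)
      (𝓝 (1 * (ρ₁ / (ρ₁ + ρ₂)))) := by
    refine Tendsto.mul ?_ (tendsto_one_sub_rpow_div_one_sub_rpow hρ.ne)
    simpa using ((Real.continuousAt_rpow_const 1 ρ₂ (Or.inl one_ne_zero)).tendsto).mono_left
      nhdsWithin_le_nhds
  rw [← one_mul (ρ₁ / (ρ₁ + ρ₂))]
  refine le_of_tendsto hlim ?_
  filter_upwards [self_mem_nhdsWithin] with r (hr : 1 < r)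
  rw [← mul_div_assoc, div_le_iff₀ (sub_pos.2 (Real.rpow_lt_one_of_one_lt_of_neg hr hρ))]
  linarith [h r hr]

namespace StieltjesFunction

/-- With `l = 1` and `g = Ḡ` this is `H̄⁽¹⁾ / H̄`. -/
noncomputable def tailRatio (F : StieltjesFunction ℝ) (l : ℝ) (g : ℝ → ℝ) (t : ℝ) : ℝ :=
  (∫ y in Ioi t, g y ∂F.measure) / ((l - F t) * g t)

variable (F : StieltjesFunction ℝ) {g : ℝ → ℝ} {l t s : ℝ}

theorem measureReal_Ioc (hts : t ≤ s) : F.measure.real (Ioc t s) = F s - F t := by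
  rw [measureReal_def, F.measure_Ioc, ENNReal.toReal_ofReal (sub_nonneg.2 (F.mono hts))]

theorem integrableOn_Ioc_of_antitone (hg : Antitone g) : IntegrableOn g (Ioc t s) F.measure :=
  Measure.integrableOn_of_bounded (M := max |g s| |g t|)
    (by rw [F.measure_Ioc]; exact ENNReal.ofReal_ne_top) hg.measurable.aestronglyMeasurable
    ((ae_restrict_iff' measurableSet_Ioc).2 (Eventually.of_forall fun _ hy =>
      abs_le_max_abs_abs (hg hy.2) (hg hy.1.le)))

theorem integrableOn_Ioi_of_antitone (hF : Tendsto F atTop (𝓝 l)) (hg : Antitone g)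
    (hg0 : ∀ y, 0 ≤ g y) : IntegrableOn g (Ioi t) F.measure :=
  Measure.integrableOn_of_bounded (M := g t)
    (by rw [F.measure_Ioi hF]; exact ENNReal.ofReal_ne_top) hg.measurable.aestronglyMeasurable
    ((ae_restrict_iff' _root_.measurableSet_Ioi).2 (Eventually.of_forall fun y hy => by
      rw [Real.norm_of_nonneg (hg0 y)]
      exact hg hy.le))

theorem antitone_setIntegral_Ioi (hF : Tendsto F atTop (𝓝 l)) (hg : Antitone g)
    (hg0 : ∀ y, 0 ≤ g y) : Antitone fun t => ∫ y in Ioi t, g y ∂F.measure := fun _ _ hts =>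
  setIntegral_mono_set (F.integrableOn_Ioi_of_antitone hF hg hg0)
    (Eventually.of_forall hg0) (Ioi_subset_Ioi hts).eventuallyLE

theorem setIntegral_Ioi_le_mul (hF : Tendsto F atTop (𝓝 l)) (hg : Antitone g)
    (hg0 : ∀ y, 0 ≤ g y) (t : ℝ) : ∫ y in Ioi t, g y ∂F.measure ≤ g t * (l - F t) := by
  have hfin : F.measure (Ioi t) ≠ ⊤ := by rw [F.measure_Ioi hF]; exact ENNReal.ofReal_ne_top
  have hFt : F t ≤ l := ge_of_tendsto hF ((eventually_ge_atTop t).mono fun _ h => F.mono h)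
  calc ∫ y in Ioi t, g y ∂F.measure ≤ ∫ _ in Ioi t, g t ∂F.measure :=
        setIntegral_mono_on (F.integrableOn_Ioi_of_antitone hF hg hg0) (integrableOn_const hfin)
          _root_.measurableSet_Ioi fun _ hy => hg hy.le
    _ = g t * (l - F t) := by
        rw [setIntegral_const, smul_eq_mul, measureReal_def, F.measure_Ioi hF,
          ENNReal.toReal_ofReal (sub_nonneg.2 hFt), mul_comm]

theorem mul_le_setIntegral_Ioc (hg : Antitone g) (hts : t ≤ s) :
    g s * (F s - F t) ≤ ∫ y in Ioc t s, g y ∂F.measure := by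
  rw [← F.measureReal_Ioc hts]
  exact setIntegral_ge_of_const_le_real measurableSet_Ioc
    (by rw [F.measure_Ioc]; exact ENNReal.ofReal_ne_top) (fun _ hy => hg hy.2)
    (F.integrableOn_Ioc_of_antitone hg)

theorem setIntegral_Ioc_le_mul (hg : Antitone g) (hts : t ≤ s) :
    ∫ y in Ioc t s, g y ∂F.measure ≤ g t * (F s - F t) := by
  have hfin : F.measure (Ioc t s) ≠ ⊤ := by rw [F.measure_Ioc]; exact ENNReal.ofReal_ne_top
  calc ∫ y in Ioc t s, g y ∂F.measure ≤ ∫ _ in Ioc t s, g t ∂F.measure :=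
        setIntegral_mono_on (F.integrableOn_Ioc_of_antitone hg) (integrableOn_const hfin)
          measurableSet_Ioc fun _ hy => hg hy.1.le
    _ = g t * (F s - F t) := by rw [setIntegral_const, smul_eq_mul, F.measureReal_Ioc hts, mul_comm]

theorem setIntegral_Ioi_eq_add (hF : Tendsto F atTop (𝓝 l)) (hg : Antitone g)
    (hg0 : ∀ y, 0 ≤ g y) (hts : t ≤ s) :
    ∫ y in Ioi t, g y ∂F.measure =
      ∫ y in Ioc t s, g y ∂F.measure + ∫ y in Ioi s, g y ∂F.measure := by
  rw [← setIntegral_union Ioc_disjoint_Ioi_same _root_.measurableSet_Ioi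
    (F.integrableOn_Ioc_of_antitone hg) (F.integrableOn_Ioi_of_antitone hF hg hg0),
    Ioc_union_Ioi_eq_Ioi hts]

theorem tailRatio_le (hF : Tendsto F atTop (𝓝 l)) (hFpos : ∀ t, 0 < l - F t) (hg : Antitone g)
    (hgpos : ∀ t, 0 < g t) (hts : t ≤ s) :
    F.tailRatio l g t ≤
      1 - (l - F s) / (l - F t) + (l - F s) / (l - F t) * (g s / g t) * F.tailRatio l g s := by
  have hsplit : 1 - (l - F s) / (l - F t) + (l - F s) / (l - F t) * (g s / g t) * F.tailRatio l g s
      = (g t * (F s - F t) + ∫ y in Ioi s, g y ∂F.measure) / ((l - F t) * g t) := by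
    have := (hFpos t).ne'; have := (hFpos s).ne'; have := (hgpos t).ne'; have := (hgpos s).ne'
    unfold tailRatio
    field_simp
    ring
  rw [hsplit, tailRatio, F.setIntegral_Ioi_eq_add hF hg (fun y => (hgpos y).le) hts]
  gcongr
  · exact (mul_pos (hFpos t) (hgpos t)).le
  · exact F.setIntegral_Ioc_le_mul hg hts

theorem le_tailRatio (hF : Tendsto F atTop (𝓝 l)) (hFpos : ∀ t, 0 < l - F t) (hg : Antitone g)
    (hgpos : ∀ t, 0 < g t) (hts : t ≤ s) :
    g s / g t * (1 - (l - F s) / (l - F t)) +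
      (l - F s) / (l - F t) * (g s / g t) * F.tailRatio l g s ≤ F.tailRatio l g t := by
  have hsplit : g s / g t * (1 - (l - F s) / (l - F t)) +
      (l - F s) / (l - F t) * (g s / g t) * F.tailRatio l g s
      = (g s * (F s - F t) + ∫ y in Ioi s, g y ∂F.measure) / ((l - F t) * g t) := by
    have := (hFpos t).ne'; have := (hFpos s).ne'; have := (hgpos t).ne'; have := (hgpos s).ne'
    unfold tailRatio
    field_simp
    ring
  rw [hsplit, tailRatio, F.setIntegral_Ioi_eq_add hF hg (fun y => (hgpos y).le) hts]
  gcongr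
  · exact (mul_pos (hFpos t) (hgpos t)).le
  · exact F.mul_le_setIntegral_Ioc hg hts

theorem tailRatio_mem_Icc (hF : Tendsto F atTop (𝓝 l)) (hFpos : ∀ t, 0 < l - F t)
    (hg : Antitone g) (hgpos : ∀ t, 0 < g t) (t : ℝ) : F.tailRatio l g t ∈ Icc 0 1 := by
  have hpos := mul_pos (hFpos t) (hgpos t)
  refine ⟨div_nonneg (setIntegral_nonneg _root_.measurableSet_Ioi fun y _ => (hgpos y).le)
    hpos.le, (div_le_one hpos).2 ?_⟩
  rw [mul_comm]
  exact F.setIntegral_Ioi_le_mul hF hg (fun y => (hgpos y).le) t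

theorem tendsto_tailRatio (hF : Tendsto F atTop (𝓝 l)) (hFpos : ∀ t, 0 < l - F t)
    (hg : Antitone g) (hgpos : ∀ t, 0 < g t) {ρ₁ ρ₂ : ℝ} (hρ : ρ₁ + ρ₂ < 0)
    (hRVF : RegVary (fun t => l - F t) ρ₁) (hRVg : RegVary g ρ₂) :
    Tendsto (F.tailRatio l g) atTop (𝓝 (ρ₁ / (ρ₁ + ρ₂))) := by
  have hR := F.tailRatio_mem_Icc hF hFpos hg hgpos
  have hbdd : IsBoundedUnder (· ≤ ·) atTop (F.tailRatio l g) :=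
    isBoundedUnder_of ⟨1, fun t => (hR t).2⟩
  have hbdd' : IsBoundedUnder (· ≥ ·) atTop (F.tailRatio l g) :=
    isBoundedUnder_of ⟨0, fun t => (hR t).1⟩
  have hshift : ∀ r > (0 : ℝ), Tendsto (fun t => t * r) atTop atTop := fun r hr =>
    tendsto_id.atTop_mul_const hr
  have hratio : ∀ r > (0 : ℝ), Tendsto (fun t => (l - F (t * r)) / (l - F t) * (g (t * r) / g t))
      atTop (𝓝 (r ^ (ρ₁ + ρ₂))) := fun r hr => by
    simpa only [Real.rpow_add hr] using (hRVF r hr).mul (hRVg r hr)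
  have hnonneg : ∀ r t, 0 ≤ (l - F (t * r)) / (l - F t) * (g (t * r) / g t) := fun r t =>
    mul_nonneg (div_nonneg (hFpos _).le (hFpos _).le) (div_nonneg (hgpos _).le (hgpos _).le)
  have hstep : ∀ r ≥ (1 : ℝ), ∀ᶠ t in atTop, t ≤ t * r := fun r hr =>
    (eventually_ge_atTop 0).mono fun t ht => le_mul_of_one_le_right ht hr
  refine tendsto_of_le_liminf_of_limsup_le (div_add_le_of_forall_one_lt hρ fun r hr => ?_)
    (le_div_add_of_forall_one_lt hρ fun r hr => ?_) hbdd hbdd'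
  · have hr0 : 0 < r := zero_lt_one.trans hr
    refine add_mul_liminf_le_liminf (hshift r hr0) hbdd hbdd'
      ((hRVg r hr0).mul ((hRVF r hr0).const_sub 1)) (hratio r hr0)
      (Eventually.of_forall (hnonneg r)) ?_
    filter_upwards [hstep r hr.le] with t ht using F.le_tailRatio hF hFpos hg hgpos ht
  · have hr0 : 0 < r := zero_lt_one.trans hr
    refine limsup_le_add_mul_limsup (hshift r hr0) hbdd hbdd' ((hRVF r hr0).const_sub 1)
      (hratio r hr0) (Eventually.of_forall (hnonneg r)) ?_
    filter_upwards [hstep r hr.le] with t ht using F.tailRatio_le hF hFpos hg hgpos ht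

end StieltjesFunction

theorem statement14_general (F G : StieltjesFunction ℝ)
    (hFtop : Tendsto F atTop (nhds 1))
    (hFbarpos : ∀ t : ℝ, 0 < 1 - F t) (hGbarpos : ∀ t : ℝ, 0 < 1 - G t)
    (γ₁ γ₂ : ℝ) (hγ₁ : 0 < γ₁) (hγ₂ : 0 < γ₂)
    (hRVF : RegVary (fun t => 1 - F t) (-1 / γ₁))
    (hRVG : RegVary (fun t => 1 - G t) (-1 / γ₂))
    (γ p : ℝ) (hγ : γ = γ₁ * γ₂ / (γ₁ + γ₂)) (hp : p = γ / γ₁) :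
    Tendsto
      (fun z => ⨆ w : {w : ℝ // 1 ≤ w},
        |(∫ y in Set.Ioi (z * (w : ℝ)), (1 - G y) ∂F.measure)
            / ((1 - F z) * (1 - G z))
          - p * (w : ℝ) ^ (-1 / γ)|)
      atTop (nhds 0) := by
  have hγ0 : 0 < γ := hγ ▸ by positivity
  have hsum : -1 / γ₁ + -1 / γ₂ = -1 / γ := by rw [hγ]; field_simp; ring
  have hρ : -1 / γ₁ + -1 / γ₂ < 0 := hsum ▸ div_neg_of_neg_of_pos (by norm_num) hγ0
  have hp' : p = -1 / γ₁ / (-1 / γ₁ + -1 / γ₂) := by rw [hsum, hp]; field_simp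
  have hGanti : Antitone fun y => 1 - G y := fun _ _ h => sub_le_sub_left (G.mono h) 1
  have hGnonneg : ∀ y, 0 ≤ 1 - G y := fun y => (hGbarpos y).le
  have hden : ∀ z, 0 < (1 - F z) * (1 - G z) := fun z => mul_pos (hFbarpos z) (hGbarpos z)
  refine tendsto_iSup_abs_sub_of_antitoneOn
    (f := fun z w => (∫ y in Ioi (z * w), (1 - G y) ∂F.measure) / ((1 - F z) * (1 - G z)))
    (g := fun w => p * w ^ (-1 / γ)) ?_ ?_ (fun w hw => ?_) ?_ ?_
  · filter_upwards [eventually_gt_atTop 0] with z hz w _ w' _ hww'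
    exact div_le_div_of_nonneg_right (F.antitone_setIntegral_Ioi hFtop hGanti hGnonneg
      (mul_le_mul_of_nonneg_left hww' hz.le)) (hden z).le
  · exact Eventually.of_forall fun z w _ =>
      div_nonneg (setIntegral_nonneg measurableSet_Ioi fun y _ => hGnonneg y) (hden z).le
  · rw [hp', ← hsum]
    exact (hRVF.mul hRVG).tendsto_comp_mul_div (Eventually.of_forall fun z => (hden z).ne')
      (F.tendsto_tailRatio hFtop hFbarpos hGanti hGbarpos hρ hRVF hRVG) (zero_lt_one.trans_le hw)
  · exact fun w hw => (continuousAt_const.mul (Real.continuousAt_rpow_const _ _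
      (Or.inl (zero_lt_one.trans_le hw).ne'))).continuousWithinAt
  · simpa [neg_div] using (tendsto_rpow_neg_atTop (one_div_pos.2 hγ0)).const_mul p

/-- If `F̄` and `Ḡ` are regularly varying at infinity with indices `−1/γ₁` and `−1/γ₂`, then
with `H̄ = F̄Ḡ`, `H̄⁽¹⁾(z) = ∫_{(z,∞)} Ḡ dF`, `γ = γ₁γ₂/(γ₁+γ₂)` and `p = γ/γ₁`, one has
`lim_{z→∞} sup_{w ≥ 1} |H̄⁽¹⁾(zw)/H̄(z) − p·w^{−1/γ}| = 0`. -/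
theorem statement14 (F G : StieltjesFunction ℝ)
    (hFcont : Continuous F) (hGcont : Continuous G)
    (hF0 : ∀ z < (0 : ℝ), F z = 0) (hG0 : ∀ z < (0 : ℝ), G z = 0)
    (hFtop : Tendsto F atTop (nhds 1)) (hGtop : Tendsto G atTop (nhds 1))
    (hFbarpos : ∀ t : ℝ, 0 < 1 - F t) (hGbarpos : ∀ t : ℝ, 0 < 1 - G t)
    (γ₁ γ₂ : ℝ) (hγ₁ : 0 < γ₁) (hγ₂ : 0 < γ₂)
    (hRVF : RegVary (fun t => 1 - F t) (-1 / γ₁))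
    (hRVG : RegVary (fun t => 1 - G t) (-1 / γ₂))
    (γ p : ℝ) (hγ : γ = γ₁ * γ₂ / (γ₁ + γ₂)) (hp : p = γ / γ₁) :
    Tendsto
      (fun z => ⨆ w : {w : ℝ // 1 ≤ w},
        |(∫ y in Set.Ioi (z * (w : ℝ)), (1 - G y) ∂F.measure)
            / ((1 - F z) * (1 - G z))
          - p * (w : ℝ) ^ (-1 / γ)|)
      atTop (nhds 0) :=
  statement14_general F G hFtop hFbarpos hGbarpos γ₁ γ₂ hγ₁ hγ₂ hRVF hRVG γ p hγ hp
end
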